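/- The three two-dimensional abelian subalgebras ℂX_α⊕ℂX_{3α+β}, ℂX_β⊕ℂX_{3α+2β} and ℂX_α⊕ℂX_{3α+2β} of G₂ are pairwise non-conjugate: no Lie algebra automorphism of G₂ maps any one of them onto another. -/

import Mathlib

namespace G2Formal

/-- The positive roots of `G₂`: the pair `(k, l)` encodes `k•α + l•β`,
where `α` is the short simple root and `β` is the long simple root. -/
def PhiP : Set (ℤ × ℤ) := {(1,0), (0,1), (1,1), (2,1), (3,1), (3,2)}

/-- All twelve roots of `G₂`. -/
def Phi : Set (ℤ × ℤ) :=
  {(1,0), (0,1), (1,1), (2,1), (3,1), (3,2),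
   (-1,0), (0,-1), (-1,-1), (-2,-1), (-3,-1), (-3,-2)}

/-- The invariant inner product on the root space, normalized by `(α,α) = 1`,
`(β,β) = 3`, `(α,β) = -3/2`. -/
def ip (μ ν : ℤ × ℤ) : ℚ :=
  (μ.1 * ν.1 : ℤ) - (3/2 : ℚ) * ((μ.1 * ν.2 + μ.2 * ν.1 : ℤ)) + 3 * ((μ.2 * ν.2 : ℤ) : ℚ)

/-- The Cartan pairing `⟨ν, μ^∨⟩ = 2(μ,ν)/(μ,μ)`. -/
def cart (μ ν : ℤ × ℤ) : ℚ := 2 * ip μ ν / ip μ μ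

/-- Base table of structure constants `N_{μ,ν}` from the multiplication table of `G₂`. -/
def N0 (μ ν : ℤ × ℤ) : ℤ :=
  if μ = (0,1) ∧ ν = (1,0) then 1
  else if μ = (0,1) ∧ ν = (3,1) then 1
  else if μ = (3,1) ∧ ν = (-3,-2) then 1
  else if μ = (2,1) ∧ ν = (-3,-1) then 1
  else if μ = (2,1) ∧ ν = (-3,-2) then 1
  else if μ = (-3,-2) ∧ ν = (1,1) then 1
  else if μ = (-3,-2) ∧ ν = (0,1) then 1
  else if μ = (-3,-1) ∧ ν = (1,0) then 1
  else if μ = (-1,-1) ∧ ν = (0,1) then 1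
  else if μ = (1,1) ∧ ν = (1,0) then 2
  else if μ = (1,0) ∧ ν = (-2,-1) then 2
  else if μ = (-2,-1) ∧ ν = (1,1) then 2
  else if μ = (1,0) ∧ ν = (2,1) then 3
  else if μ = (1,0) ∧ ν = (-1,-1) then 3
  else if μ = (1,1) ∧ ν = (2,1) then 3
  else 0

/-- The full table of structure constants, obtained from the base table via
`N_{μ,ν} = -N_{ν,μ} = -N_{-μ,-ν}`. -/
def Nc (μ ν : ℤ × ℤ) : ℤ := N0 μ ν - N0 ν μ - N0 (-μ) (-ν) + N0 (-ν) (-μ)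

variable {L : Type*} [LieRing L] [LieAlgebra ℂ L]

/-- The coroot `H_μ` expressed in the basis `H_α`, `H_β` of the Cartan subalgebra. -/
noncomputable def Hr (Hα Hβ : L) (μ : ℤ × ℤ) : L :=
  ((((μ.1 : ℚ) / ip μ μ : ℚ) : ℂ)) • Hα + ((((3 * μ.2 : ℚ) / ip μ μ : ℚ) : ℂ)) • Hβ

/-- The Chevalley basis of `G₂` as a family indexed by `Fin 14`. -/
def chev (Hα Hβ : L) (X : ℤ × ℤ → L) : Fin 14 → L :=
  ![Hα, Hβ, X (1,0), X (-1,0), X (0,1), X (0,-1), X (1,1), X (-1,-1),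
    X (2,1), X (-2,-1), X (3,1), X (-3,-1), X (3,2), X (-3,-2)]

/-- `IsG2 Hα Hβ X` says that the complex Lie algebra `L`, together with the elements
`Hα`, `Hβ` and the root vectors `X γ` (for `γ` a root of `G₂`), realizes the multiplication
table of the simple complex Lie algebra of type `G₂` in its Chevalley basis, and that the
fourteen Chevalley basis vectors form a basis of `L`.  Any such `L` is a copy of `G₂`. -/
structure IsG2 (Hα Hβ : L) (X : ℤ × ℤ → L) : Prop where
  indep : LinearIndependent ℂ (chev Hα Hβ X)
  span_top : Submodule.span ℂ (Set.range (chev Hα Hβ X)) = ⊤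
  bracket_hh : ⁅Hα, Hβ⁆ = 0
  bracket_hx : ∀ μ ∈ Phi, ∀ ν ∈ Phi, ⁅Hr Hα Hβ μ, X ν⁆ = ((cart μ ν : ℚ) : ℂ) • X ν
  bracket_xnegx : ∀ μ ∈ Phi, ⁅X μ, X (-μ)⁆ = Hr Hα Hβ μ
  bracket_xx : ∀ μ ∈ Phi, ∀ ν ∈ Phi, μ + ν ∈ Phi →
    ⁅X μ, X ν⁆ = ((Nc μ ν : ℤ) : ℂ) • X (μ + ν)
  bracket_xx_zero : ∀ μ ∈ Phi, ∀ ν ∈ Phi, μ + ν ≠ 0 → μ + ν ∉ Phi → ⁅X μ, X ν⁆ = 0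

/-- Two Lie subalgebras of `L` are conjugate if some Lie algebra automorphism of `L`
maps one onto the other. -/
def SubalgConj (g k : LieSubalgebra ℂ L) : Prop :=
  ∃ s : L ≃ₗ⁅ℂ⁆ L, g.map s.toLieHom = k

/-- A submodule is conjugate (as a subalgebra) to a given submodule if some Lie algebra
automorphism of `L` maps it onto the latter. -/
def ModConj (W W' : Submodule ℂ L) : Prop :=
  ∃ s : L ≃ₗ⁅ℂ⁆ L, W.map (s.toLinearEquiv : L →ₗ[ℂ] L) = W'

/-- A Lie subalgebra of `G₂` is *regular* if it is conjugate to a subalgebra of the form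
`g(Σ, W) = W ⊕ ⊕_{γ ∈ Σ} ℂ X_γ` where `Σ ⊆ Φ` is closed and `W` is a subspace of the
Cartan subalgebra containing `[X_γ, X_{-γ}]` for every `γ ∈ Σ ∩ (-Σ)`. -/
def IsRegularSubalgebra (Hα Hβ : L) (X : ℤ × ℤ → L) (g : LieSubalgebra ℂ L) : Prop :=
  ∃ (S : Set (ℤ × ℤ)) (W : Submodule ℂ L) (k : LieSubalgebra ℂ L),
    S ⊆ Phi ∧
    (∀ x ∈ S, ∀ y ∈ S, x + y ∈ Phi → x + y ∈ S) ∧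
    W ≤ Submodule.span ℂ {Hα, Hβ} ∧
    (∀ γ ∈ S, -γ ∈ S → ⁅X γ, X (-γ)⁆ ∈ W) ∧
    k.toSubmodule = W ⊔ Submodule.span ℂ (X '' S) ∧
    SubalgConj g k

/-- A Levi subalgebra of a Lie algebra `g`: a semisimple subalgebra which is a vector
space complement of the solvable radical. -/
def IsLeviOf (g : LieSubalgebra ℂ L) (m : LieSubalgebra ℂ ↥g) : Prop :=
  LieAlgebra.IsSemisimple ℂ ↥m ∧
  IsCompl m.toSubmodule (LieAlgebra.radical ℂ ↥g).toSubmodule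


variable {L : Type*} [LieRing L] [LieAlgebra ℂ L]

/-- The three two-dimensional abelian nilpotent subalgebras
`ℂX_α ⊕ ℂX_{3α+β}`, `ℂX_β ⊕ ℂX_{3α+2β}` and `ℂX_α ⊕ ℂX_{3α+2β}` of `G₂`. -/
def abelianPair (X : ℤ × ℤ → L) : Fin 3 → Submodule ℂ L :=
  ![Submodule.span ℂ {X (1,0), X (3,1)},
    Submodule.span ℂ {X (0,1), X (3,2)},
    Submodule.span ℂ {X (1,0), X (3,2)}]

/-!
An automorphism carrying `W` onto `W'` carries `[W, 𝔤]` onto `[W', 𝔤]`, so `dim [W, 𝔤]` is a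
conjugacy invariant. For `W = ℂX_a ⊕ ℂX_b` we have `[W, 𝔤] = [X_a, 𝔤] + [X_b, 𝔤]`, and
`[X_γ, 𝔤]` is spanned by `H_γ` and the `X_ν` with `ν - γ ∈ Φ ∪ {0}`, because every structure
constant `N_{μ,ν}` with `μ + ν ∈ Φ` is nonzero. As `a` and `b` are linearly independent,
`H_a` and `H_b` span the Cartan subalgebra, so `dim [W, 𝔤]` is two more than the number of
such roots `ν`: this gives `10`, `9` and `11` for the three subalgebras.
-/

lemma span_pair_eq_of_det_ne_zero {K V : Type*} [Field K] [AddCommGroup V] [Module K V]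
    (x y : V) {a b c d : K} (h : a * d - b * c ≠ 0) :
    Submodule.span K {a • x + b • y, c • x + d • y} = Submodule.span K {x, y} := by
  refine le_antisymm (Submodule.span_le.2 ?_) (Submodule.span_le.2 ?_)
  · rintro _ (rfl | rfl)
    · exact Submodule.mem_span_pair.2 ⟨a, b, rfl⟩
    · exact Submodule.mem_span_pair.2 ⟨c, d, rfl⟩
  · rintro _ (rfl | rfl) <;> rw [SetLike.mem_coe, ← Submodule.smul_mem_iff _ h]
    · exact Submodule.mem_span_pair.2 ⟨d, -b, by module⟩
    · exact Submodule.mem_span_pair.2 ⟨-c, a, by module⟩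

section LieAlgebra

variable {K L L' : Type*} [CommRing K] [LieRing L] [LieAlgebra K L] [LieRing L'] [LieAlgebra K L']

def bracketSpan (W : Submodule K L) : Submodule K L :=
  Submodule.map₂ (LieAlgebra.ad K L : L →ₗ[K] Module.End K L) W ⊤

lemma bracketSpan_span_pair (a b : L) :
    bracketSpan (Submodule.span K {a, b}) =
      LinearMap.range (LieAlgebra.ad K L a) ⊔ LinearMap.range (LieAlgebra.ad K L b) := by
  rw [bracketSpan, Submodule.span_insert, Submodule.map₂_sup_left,
    Submodule.map₂_span_singleton_eq_map, Submodule.map₂_span_singleton_eq_map,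
    Submodule.map_top, Submodule.map_top]
  rfl

lemma bracketSpan_map (e : L ≃ₗ⁅K⁆ L') (W : Submodule K L) :
    bracketSpan (W.map (e.toLinearEquiv : L →ₗ[K] L')) =
      (bracketSpan W).map (e.toLinearEquiv : L →ₗ[K] L') := by
  have htop : (⊤ : Submodule K L).map (e.toLinearEquiv : L →ₗ[K] L') = ⊤ := by
    rw [Submodule.map_top, LinearEquiv.range]
  rw [bracketSpan, bracketSpan, ← htop, Submodule.map₂_map_map, Submodule.map_map₂]
  congr 1
  ext x y
  exact (e.map_lie x y).symm

lemma lie_eq_zero_of_mem_span_pair {u v x y : L} (huv : ⁅u, v⁆ = 0)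
    (hx : x ∈ Submodule.span K {u, v}) (hy : y ∈ Submodule.span K {u, v}) : ⁅x, y⁆ = 0 := by
  have hvu : ⁅v, u⁆ = 0 := by rw [← lie_skew, huv, neg_zero]
  obtain ⟨a, b, rfl⟩ := Submodule.mem_span_pair.1 hx
  obtain ⟨c, d, rfl⟩ := Submodule.mem_span_pair.1 hy
  simp [huv, hvu]

end LieAlgebra

section RootData

def rootFinset : Finset (ℤ × ℤ) :=
  {(1,0), (0,1), (1,1), (2,1), (3,1), (3,2), (-1,0), (0,-1), (-1,-1), (-2,-1), (-3,-1), (-3,-2)}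

lemma mem_rootFinset {ν : ℤ × ℤ} : ν ∈ rootFinset ↔ ν ∈ Phi := by
  simp [rootFinset, Phi]

lemma zero_notMem_Phi : (0 : ℤ × ℤ) ∉ Phi := by
  rw [← mem_rootFinset]
  decide

lemma ip_self_pos {γ : ℤ × ℤ} (hγ : γ ≠ 0) : 0 < ip γ γ := by
  obtain ⟨a, b⟩ := γ
  have hsq : ip (a, b) (a, b) = ((a : ℚ) - 3 / 2 * b) ^ 2 + 3 / 4 * (b : ℚ) ^ 2 := by
    simp only [ip]
    push_cast
    ring
  rw [hsq]
  rcases eq_or_ne b 0 with rfl | hb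
  · have ha : a ≠ 0 := fun ha => hγ (by rw [ha]; rfl)
    simp only [Int.cast_zero, mul_zero, sub_zero, zero_pow two_ne_zero, add_zero]
    positivity
  · positivity

lemma cart_self {γ : ℤ × ℤ} (hγ : γ ≠ 0) : cart γ γ = 2 := by
  rw [cart, mul_div_assoc, div_self (ip_self_pos hγ).ne', mul_one]

lemma Nc_ne_zero {μ ν : ℤ × ℤ} (hμ : μ ∈ Phi) (hν : ν ∈ Phi) (hμν : μ + ν ∈ Phi) :
    Nc μ ν ≠ 0 := by
  have key : ∀ μ ∈ rootFinset, ∀ ν ∈ rootFinset, μ + ν ∈ rootFinset → Nc μ ν ≠ 0 := by decide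
  exact key μ (mem_rootFinset.2 hμ) ν (mem_rootFinset.2 hν) (mem_rootFinset.2 hμν)

/-- The roots `ν` with `X ν ∈ [X γ, 𝔤]` (see `IsG2.range_ad_rootVector`). -/
def adSupport (γ : ℤ × ℤ) : Finset (ℤ × ℤ) :=
  rootFinset.filter fun ν => ν = γ ∨ ν - γ ∈ rootFinset

lemma mem_adSupport {γ ν : ℤ × ℤ} : ν ∈ adSupport γ ↔ ν ∈ Phi ∧ (ν = γ ∨ ν - γ ∈ Phi) := by
  simp only [adSupport, Finset.mem_filter, mem_rootFinset]

lemma coe_adSupport_subset (γ : ℤ × ℤ) : (adSupport γ : Set (ℤ × ℤ)) ⊆ Phi :=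
  fun _ hν => (mem_adSupport.1 hν).1

/-- The weight of the `i`-th vector of `chev`, with `0` for `Hα` and `Hβ`. -/
def chevWeight : Fin 14 → ℤ × ℤ :=
  ![0, 0, (1,0), (-1,0), (0,1), (0,-1), (1,1), (-1,-1),
    (2,1), (-2,-1), (3,1), (-3,-1), (3,2), (-3,-2)]

lemma exists_chevWeight_eq {ν : ℤ × ℤ} (hν : ν ∈ Phi) : ∃ i, chevWeight i = ν := by
  have key : ∀ ν ∈ rootFinset, ∃ i, chevWeight i = ν := by decide
  exact key ν (mem_rootFinset.2 hν)

end RootData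

section ChevalleyBasis

variable {L : Type*} {Hα Hβ : L} {X : ℤ × ℤ → L}

lemma chev_of_chevWeight_mem {i : Fin 14} (hi : chevWeight i ∈ Phi) :
    chev Hα Hβ X i = X (chevWeight i) := by
  fin_cases i
  all_goals first | rfl | exact absurd hi zero_notMem_Phi

lemma range_chev : Set.range (chev Hα Hβ X) = {Hα, Hβ} ∪ X '' Phi := by
  apply Set.Subset.antisymm
  · rintro _ ⟨i, rfl⟩
    by_cases hi : chevWeight i ∈ Phi
    · exact Or.inr ⟨_, hi, (chev_of_chevWeight_mem hi).symm⟩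
    · revert hi
      fin_cases i <;> simp [chev, chevWeight, Phi]
  · rintro _ ((rfl | rfl) | ⟨ν, hν, rfl⟩)
    · exact ⟨0, rfl⟩
    · exact ⟨1, rfl⟩
    · obtain ⟨i, rfl⟩ := exists_chevWeight_eq hν
      exact ⟨i, chev_of_chevWeight_mem hν⟩

end ChevalleyBasis

section G2

variable {L : Type*} [LieRing L] [LieAlgebra ℂ L] {Hα Hβ : L} {X : ℤ × ℤ → L}

open LieAlgebra Submodule Module

lemma Hr_one_zero : Hr Hα Hβ (1, 0) = Hα := by norm_num [Hr, ip]

lemma Hr_zero_one : Hr Hα Hβ (0, 1) = Hβ := by norm_num [Hr, ip]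

lemma span_Hr_pair {a b : ℤ × ℤ} (hab : a.1 * b.2 ≠ a.2 * b.1) :
    span ℂ {Hr Hα Hβ a, Hr Hα Hβ b} = span ℂ {Hα, Hβ} := by
  have ha : ip a a ≠ 0 := (ip_self_pos (by rintro rfl; simp at hab)).ne'
  have hb : ip b b ≠ 0 := (ip_self_pos (by rintro rfl; simp at hab)).ne'
  have hdet : (a.1 / ip a a) * (3 * b.2 / ip b b) - (3 * a.2 / ip a a) * (b.1 / ip b b) =
      3 * ((a.1 * b.2 - a.2 * b.1 : ℤ) : ℚ) / (ip a a * ip b b) := by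
    push_cast
    field_simp
  apply span_pair_eq_of_det_ne_zero
  rw [← Rat.cast_mul, ← Rat.cast_mul, ← Rat.cast_sub, Rat.cast_ne_zero, hdet]
  exact div_ne_zero (mul_ne_zero three_ne_zero (Int.cast_ne_zero.2 (sub_ne_zero.2 hab)))
    (mul_ne_zero ha hb)

lemma IsG2.linearIndepOn_cartan_union_rootVectors (hG2 : IsG2 Hα Hβ X) :
    LinearIndepOn ℂ id ({Hα, Hβ} ∪ X '' Phi) :=
  range_chev (Hα := Hα) ▸ hG2.indep.linearIndepOn_id

lemma IsG2.injOn_rootVector (hG2 : IsG2 Hα Hβ X) : Set.InjOn X Phi := by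
  intro μ hμ ν hν h
  obtain ⟨i, rfl⟩ := exists_chevWeight_eq hμ
  obtain ⟨j, rfl⟩ := exists_chevWeight_eq hν
  rw [← chev_of_chevWeight_mem (Hα := Hα) (Hβ := Hβ) (X := X) hμ,
    ← chev_of_chevWeight_mem (Hα := Hα) (Hβ := Hβ) (X := X) hν] at h
  rw [hG2.indep.injective h]

lemma IsG2.rootVector_ne_cartan (hG2 : IsG2 Hα Hβ X) {ν : ℤ × ℤ} (hν : ν ∈ Phi) :
    X ν ≠ Hα ∧ X ν ≠ Hβ := by
  obtain ⟨i, rfl⟩ := exists_chevWeight_eq hν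
  rw [← chev_of_chevWeight_mem (Hα := Hα) (Hβ := Hβ) (X := X) hν]
  constructor <;> intro h
  · rw [hG2.indep.injective (a₂ := 0) h] at hν
    exact zero_notMem_Phi hν
  · rw [hG2.indep.injective (a₂ := 1) h] at hν
    exact zero_notMem_Phi hν

lemma IsG2.finrank_span_finset (hG2 : IsG2 Hα Hβ X) {T : Finset L}
    (hT : (T : Set L) ⊆ {Hα, Hβ} ∪ X '' Phi) : finrank ℂ (span ℂ (T : Set L)) = T.card :=
  finrank_span_finset_eq_card (hG2.linearIndepOn_cartan_union_rootVectors.mono hT)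

lemma IsG2.finrank_span_cartan_union_rootVectors (hG2 : IsG2 Hα Hβ X) (S : Finset (ℤ × ℤ))
    (hS : (S : Set (ℤ × ℤ)) ⊆ Phi) :
    finrank ℂ (span ℂ ({Hα, Hβ} ∪ X '' S)) = S.card + 2 := by
  classical
  have hcoe : ({Hα, Hβ} ∪ X '' S : Set L) = ↑(insert Hα (insert Hβ (S.image X))) := by
    push_cast
    rw [Set.insert_union, Set.singleton_union]
  have hαβ : Hα ≠ Hβ := fun h => by simpa using hG2.indep.injective (a₁ := 0) (a₂ := 1) h
  have hα : Hα ∉ S.image X := by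
    simp only [Finset.mem_image, not_exists, not_and]
    exact fun ν hν => (hG2.rootVector_ne_cartan (hS hν)).1
  have hβ : Hβ ∉ S.image X := by
    simp only [Finset.mem_image, not_exists, not_and]
    exact fun ν hν => (hG2.rootVector_ne_cartan (hS hν)).2
  rw [hcoe, hG2.finrank_span_finset (hcoe ▸ Set.union_subset_union_right _ (Set.image_mono hS)),
    Finset.card_insert_of_notMem (by simp [hαβ, hα]), Finset.card_insert_of_notMem hβ,
    Finset.card_image_of_injOn (hG2.injOn_rootVector.mono hS)]

lemma IsG2.finrank_span_rootVector_pair (hG2 : IsG2 Hα Hβ X) {a b : ℤ × ℤ} (ha : a ∈ Phi)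
    (hb : b ∈ Phi) (hab : a ≠ b) : finrank ℂ (span ℂ {X a, X b}) = 2 := by
  classical
  have hsub : ({X a, X b} : Set L) ⊆ {Hα, Hβ} ∪ X '' Phi := Set.subset_union_of_subset_right
    (Set.image_pair X a b ▸ Set.image_mono (Set.pair_subset ha hb)) _
  have hcoe : ({X a, X b} : Set L) = ↑({X a, X b} : Finset L) := Finset.coe_pair.symm
  rw [hcoe, hG2.finrank_span_finset (hcoe ▸ hsub),
    Finset.card_pair (hG2.injOn_rootVector.ne ha hb hab)]

lemma IsG2.lie_rootVector_rootVector_mem (hG2 : IsG2 Hα Hβ X) {γ μ : ℤ × ℤ} (hγ : γ ∈ Phi)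
    (hμ : μ ∈ Phi) : ⁅X γ, X μ⁆ ∈ span ℂ (insert (Hr Hα Hβ γ) (X '' adSupport γ)) := by
  by_cases h0 : γ + μ = 0
  · obtain rfl : μ = -γ := eq_neg_of_add_eq_zero_right h0
    rw [hG2.bracket_xnegx γ hγ]
    exact subset_span (Set.mem_insert _ _)
  by_cases hsum : γ + μ ∈ Phi
  · rw [hG2.bracket_xx γ hγ μ hμ hsum]
    refine smul_mem _ _ (subset_span (Set.mem_insert_of_mem _ ⟨γ + μ, ?_, rfl⟩))
    rw [Finset.mem_coe, mem_adSupport, add_sub_cancel_left]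
    exact ⟨hsum, Or.inr hμ⟩
  · rw [hG2.bracket_xx_zero γ hγ μ hμ h0 hsum]
    exact zero_mem _

lemma IsG2.lie_rootVector_cartan_mem (hG2 : IsG2 Hα Hβ X) {γ ν : ℤ × ℤ} (hγ : γ ∈ Phi)
    (hν : ν ∈ Phi) : ⁅X γ, Hr Hα Hβ ν⁆ ∈ span ℂ (insert (Hr Hα Hβ γ) (X '' adSupport γ)) := by
  rw [← lie_skew, hG2.bracket_hx ν hν γ hγ]
  refine neg_mem (smul_mem _ _ (subset_span (Set.mem_insert_of_mem _ ⟨γ, ?_, rfl⟩)))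
  exact mem_adSupport.2 ⟨hγ, Or.inl rfl⟩

lemma IsG2.range_ad_rootVector (hG2 : IsG2 Hα Hβ X) {γ : ℤ × ℤ} (hγ : γ ∈ Phi) :
    LinearMap.range (ad ℂ L (X γ)) = span ℂ (insert (Hr Hα Hβ γ) (X '' adSupport γ)) := by
  apply le_antisymm
  · rw [LinearMap.range_eq_map, ← hG2.span_top, map_span, span_le, range_chev]
    rintro _ ⟨y, (hα | hβ) | ⟨μ, hμ, rfl⟩, rfl⟩
    · have h := hG2.lie_rootVector_cartan_mem hγ (ν := (1, 0)) (by simp [Phi])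
      rw [Hr_one_zero] at h
      rwa [hα]
    · have h := hG2.lie_rootVector_cartan_mem hγ (ν := (0, 1)) (by simp [Phi])
      rw [Hr_zero_one] at h
      rwa [Set.mem_singleton_iff.1 hβ]
    · exact hG2.lie_rootVector_rootVector_mem hγ hμ
  · rw [span_le]
    rintro _ (rfl | ⟨ν, hsupp, rfl⟩)
    · exact ⟨X (-γ), hG2.bracket_xnegx γ hγ⟩
    obtain ⟨hν, rfl | hνγ⟩ := mem_adSupport.1 hsupp
    · refine ⟨(-2⁻¹ : ℂ) • Hr Hα Hβ ν, ?_⟩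
      rw [LinearMap.map_smul, ad_apply, ← lie_skew, hG2.bracket_hx ν hν ν hν,
        cart_self (ne_of_mem_of_not_mem hν zero_notMem_Phi)]
      norm_num [smul_smul]
    · have hN : (Nc γ (ν - γ) : ℂ) ≠ 0 := by
        exact_mod_cast Nc_ne_zero hγ hνγ (by rwa [add_sub_cancel])
      refine ⟨(Nc γ (ν - γ) : ℂ)⁻¹ • X (ν - γ), ?_⟩
      rw [LinearMap.map_smul, ad_apply, hG2.bracket_xx γ hγ _ hνγ (by rwa [add_sub_cancel]),
        add_sub_cancel, smul_smul, inv_mul_cancel₀ hN, one_smul]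

lemma IsG2.finrank_bracketSpan_span_rootVector_pair (hG2 : IsG2 Hα Hβ X) {a b : ℤ × ℤ}
    (ha : a ∈ Phi) (hb : b ∈ Phi) (hab : a.1 * b.2 ≠ a.2 * b.1) :
    finrank ℂ (bracketSpan (span ℂ {X a, X b})) = (adSupport a ∪ adSupport b).card + 2 := by
  have hsubset : ((adSupport a ∪ adSupport b : Finset (ℤ × ℤ)) : Set (ℤ × ℤ)) ⊆ Phi := by
    rw [Finset.coe_union]
    exact Set.union_subset (coe_adSupport_subset a) (coe_adSupport_subset b)
  rw [← hG2.finrank_span_cartan_union_rootVectors _ hsubset, bracketSpan_span_pair,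
    hG2.range_ad_rootVector ha, hG2.range_ad_rootVector hb, Finset.coe_union, Set.image_union,
    span_union, span_union, ← span_Hr_pair (Hα := Hα) (Hβ := Hβ) hab, span_insert, span_insert,
    span_insert, sup_sup_sup_comm]

lemma ModConj.finrank_bracketSpan_eq {W W' : Submodule ℂ L} (h : ModConj W W') :
    finrank ℂ (bracketSpan W) = finrank ℂ (bracketSpan W') := by
  obtain ⟨s, rfl⟩ := h
  rw [bracketSpan_map, LinearEquiv.finrank_map_eq]

def pairRoots : Fin 3 → (ℤ × ℤ) × (ℤ × ℤ) :=
  ![((1,0), (3,1)), ((0,1), (3,2)), ((1,0), (3,2))]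

lemma abelianPair_eq_span (X : ℤ × ℤ → L) (i : Fin 3) :
    abelianPair X i = span ℂ {X (pairRoots i).1, X (pairRoots i).2} := by
  fin_cases i <;> rfl

lemma pairRoots_spec (i : Fin 3) :
    (pairRoots i).1 ∈ Phi ∧ (pairRoots i).2 ∈ Phi ∧ (pairRoots i).1 + (pairRoots i).2 ≠ 0 ∧
      (pairRoots i).1 + (pairRoots i).2 ∉ Phi ∧
      (pairRoots i).1.1 * (pairRoots i).2.2 ≠ (pairRoots i).1.2 * (pairRoots i).2.1 := by
  fin_cases i <;> simp [pairRoots, Phi]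

lemma IsG2.finrank_bracketSpan_abelianPair (hG2 : IsG2 Hα Hβ X) (i : Fin 3) :
    finrank ℂ (bracketSpan (abelianPair X i)) = ![10, 9, 11] i := by
  obtain ⟨ha, hb, -, -, hdet⟩ := pairRoots_spec i
  rw [abelianPair_eq_span, hG2.finrank_bracketSpan_span_rootVector_pair ha hb hdet]
  fin_cases i <;> rfl

end G2

/-- **Theorem.**  The three two-dimensional abelian subalgebras `ℂX_α ⊕ ℂX_{3α+β}`,
`ℂX_β ⊕ ℂX_{3α+2β}`, `ℂX_α ⊕ ℂX_{3α+2β}` of `G₂` are pairwise non-conjugate. -/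
theorem two_dimensional_abelian_nilpotent_pairwise_nonconjugate
    (Hα Hβ : L) (X : ℤ × ℤ → L) (hG2 : IsG2 Hα Hβ X) :
    (∀ i, Module.finrank ℂ ↥(abelianPair X i) = 2) ∧
    (∀ i, ∀ x ∈ abelianPair X i, ∀ y ∈ abelianPair X i, ⁅x, y⁆ = (0:L)) ∧
    (∀ i j, i ≠ j → ¬ ModConj (abelianPair X i) (abelianPair X j)) := by
  refine ⟨fun i => ?_, fun i => ?_, fun i j hij hconj => hij ?_⟩
  · obtain ⟨ha, hb, -, -, hdet⟩ := pairRoots_spec i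
    rw [abelianPair_eq_span]
    exact hG2.finrank_span_rootVector_pair ha hb fun h => hdet (by rw [h, mul_comm])
  · obtain ⟨ha, hb, hsum, hroot, -⟩ := pairRoots_spec i
    rw [abelianPair_eq_span]
    exact fun x hx y hy =>
      lie_eq_zero_of_mem_span_pair (hG2.bracket_xx_zero _ ha _ hb hsum hroot) hx hy
  · have h := hconj.finrank_bracketSpan_eq
    rw [hG2.finrank_bracketSpan_abelianPair, hG2.finrank_bracketSpan_abelianPair] at h
    exact (by decide : Function.Injective (![10, 9, 11] : Fin 3 → ℕ)) h

end G2Formal
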